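/- arXiv:1405.0989 — 6 statements merged into one kernel-verified Lean document; each statement's English description precedes it below -/
import Mathlib

section
/- Let A₀ and A₁ be convex bodies (compact convex sets with nonempty interior) in ℝⁿ, and for t ∈ [0,1] let A_t = {t·a₁ + (1−t)·a₀ : a₀ ∈ A₀, a₁ ∈ A₁} be the Minkowski combination. Then the function t ↦ (vol(A_t))^(1/n) is concave on [0,1], where vol denotes n-dimensional Lebesgue measure. -/
/-!
In dimension one, if `{f > r}` and `{g > r}` are nonempty then
`(1 - t) • {f > r} + t • {g > r} ⊆ {h > r}`, and the one-dimensional Brunn–Minkowski inequality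
`|A| + |B| ≤ |A + B|` (translate `A` and `B` so that they meet in a single point) bounds the
measures of these superlevel sets. Once `f` and `g` are normalised to supremum one, integrating
over `r` (layer cake) and using AM–GM gives the Prékopa–Leindler inequality
`(∫ f) ^ (1 - t) * (∫ g) ^ t ≤ ∫ h` on `ℝ`, and Fubini with induction on the dimension extends it
to `ℝⁿ`. For indicator functions it becomes `|X| ^ (1 - t) * |Y| ^ t ≤ |(1 - t) • X + t • Y|`;
rescaling `X` and `Y` to equal volume turns this into
`a |X| ^ (1/n) + b |Y| ^ (1/n) ≤ |a • X + b • Y| ^ (1/n)`. For convex `A₀, A₁` one has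
`A_(a u + b v) = a • A_u + b • A_v`, so this inequality is the concavity of `t ↦ |A_t| ^ (1/n)`.
-/

open MeasureTheory Pointwise Set
open scoped ENNReal NNReal

theorem ENNReal.rpow_one_sub_mul_rpow_le {t : ℝ} (ht0 : 0 < t) (ht1 : t < 1) (a b : ℝ≥0∞) :
    a ^ (1 - t) * b ^ t ≤ ENNReal.ofReal (1 - t) * a + ENNReal.ofReal t * b := by
  have h1t : 0 < 1 - t := by linarith
  rcases eq_or_ne a ⊤ with rfl | ha
  · rw [ENNReal.mul_top (ENNReal.ofReal_pos.2 h1t).ne', top_add]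
    exact le_top
  rcases eq_or_ne b ⊤ with rfl | hb
  · rw [ENNReal.mul_top (ENNReal.ofReal_pos.2 ht0).ne', add_top]
    exact le_top
  lift a to ℝ≥0 using ha
  lift b to ℝ≥0 using hb
  have key := NNReal.geom_mean_le_arith_mean2_weighted (1 - t).toNNReal t.toNNReal a b
    (by rw [← Real.toNNReal_add h1t.le ht0.le]; simp)
  rw [Real.coe_toNNReal _ h1t.le, Real.coe_toNNReal _ ht0.le] at key
  rw [← ENNReal.coe_rpow_of_nonneg _ h1t.le, ← ENNReal.coe_rpow_of_nonneg _ ht0.le]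
  unfold ENNReal.ofReal
  exact_mod_cast key

theorem MeasureTheory.measure_le_measure_add_left {G : Type*} [AddGroup G] [MeasurableSpace G]
    [MeasurableAdd G] (μ : Measure G) [μ.IsAddLeftInvariant] {s t : Set G} (hs : s.Nonempty) :
    μ t ≤ μ (s + t) := by
  obtain ⟨a, ha⟩ := hs
  calc μ t = μ (a +ᵥ t) := (measure_vadd μ a t).symm
    _ ≤ μ (s + t) := measure_mono (by
        rw [← singleton_vadd]
        exact add_subset_add_right (singleton_subset_iff.2 ha))

theorem Real.volume_add_volume_le_of_isCompact {K L C : Set ℝ} (hK : IsCompact K)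
    (hK' : K.Nonempty) (hL : IsCompact L) (hL' : L.Nonempty) (h : K + L ⊆ C) :
    volume K + volume L ≤ volume C := by
  set c := sSup K + sInf L
  have hleft : {sInf L} + K ⊆ C ∩ Iic c := by
    rintro _ ⟨_, rfl, k, hk, rfl⟩
    have := le_csSup hK.bddAbove hk
    refine ⟨?_, by simp only [mem_Iic, c]; linarith⟩
    simpa only [add_comm] using h (add_mem_add hk (hL.sInf_mem hL'))
  have hright : {sSup K} + L ⊆ C ∩ Ici c := by
    rintro _ ⟨_, rfl, l, hl, rfl⟩
    have := csInf_le hL.bddBelow hl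
    exact ⟨h (add_mem_add (hK.sSup_mem hK') hl), by simp only [mem_Ici, c]; linarith⟩
  calc volume K + volume L
      ≤ volume (C ∩ Iic c) + volume (C ∩ Ici c) :=
        add_le_add
          ((measure_le_measure_add_left _ (singleton_nonempty _)).trans (measure_mono hleft))
          ((measure_le_measure_add_left _ (singleton_nonempty _)).trans (measure_mono hright))
    _ = volume (C ∩ Iic c) + volume (C \ Iic c) := by
        rw [sdiff_eq, compl_Iic, measure_congr ((ae_eq_refl C).inter Ioi_ae_eq_Ici.symm)]
    _ = volume C := measure_inter_add_sdiff C measurableSet_Iic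

theorem Real.volume_add_volume_le_of_measurableSet {A B C : Set ℝ} (hA : MeasurableSet A)
    (hA' : A.Nonempty) (hB : MeasurableSet B) (hB' : B.Nonempty) (h : A + B ⊆ C) :
    volume A + volume B ≤ volume C := by
  obtain ⟨a, ha⟩ := hA'
  obtain ⟨b, hb⟩ := hB'
  rw [hA.measure_eq_iSup_isCompact, hB.measure_eq_iSup_isCompact]
  simp only [iSup_and']
  refine ENNReal.biSup_add_biSup_le' ⟨∅, empty_subset _, isCompact_empty⟩
    ⟨∅, empty_subset _, isCompact_empty⟩ fun K ⟨hKA, hK⟩ L ⟨hLB, hL⟩ => ?_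
  calc volume K + volume L ≤ volume (insert a K) + volume (insert b L) :=
        add_le_add (measure_mono (subset_insert _ _)) (measure_mono (subset_insert _ _))
    _ ≤ volume C := volume_add_volume_le_of_isCompact (hK.insert a) (insert_nonempty _ _)
        (hL.insert b) (insert_nonempty _ _)
        ((add_subset_add (insert_subset ha hKA) (insert_subset hb hLB)).trans h)

theorem ENNReal.iSup_rpow {ι : Sort*} (u : ι → ℝ≥0∞) {c : ℝ} (hc : 0 < c) :
    (⨆ i, u i) ^ c = ⨆ i, u i ^ c :=
  (ENNReal.orderIsoRpow c hc).map_iSup u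

theorem ENNReal.mul_rpow_mul_mul_rpow (a b x y : ℝ≥0∞) {p q : ℝ} (hp : 0 ≤ p) (hq : 0 ≤ q) :
    (a * x) ^ p * (b * y) ^ q = a ^ p * b ^ q * (x ^ p * y ^ q) := by
  rw [ENNReal.mul_rpow_of_nonneg _ _ hp, ENNReal.mul_rpow_of_nonneg _ _ hq]
  ring

theorem MeasureTheory.lintegral_eq_lintegral_meas_ofReal_lt {α : Type*} [MeasurableSpace α]
    (μ : Measure α) {f : α → ℝ≥0∞} (hf : AEMeasurable f μ) (hf_top : ∀ x, f x ≠ ∞) :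
    ∫⁻ x, f x ∂μ = ∫⁻ r in Ioi 0, μ {x | ENNReal.ofReal r < f x} := by
  have key := lintegral_eq_lintegral_meas_lt μ (ae_of_all _ fun x => ENNReal.toReal_nonneg)
    hf.ennreal_toReal
  simp only [ENNReal.ofReal_toReal (hf_top _)] at key
  rw [key]
  refine setLIntegral_congr_fun measurableSet_Ioi fun r hr => ?_
  simp only [ENNReal.ofReal_lt_iff_lt_toReal (le_of_lt hr) (hf_top _)]

theorem measurable_fin_cons_uncurry {α : Type*} [MeasurableSpace α] {n : ℕ} :
    Measurable fun p : α × (Fin n → α) => (Fin.cons p.1 p.2 : Fin (n + 1) → α) := by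
  refine measurable_pi_iff.2 fun i => ?_
  cases i using Fin.cases <;> simp only [Fin.cons_zero, Fin.cons_succ] <;> fun_prop

theorem MeasureTheory.lintegral_fin_cons {n : ℕ} {φ : (Fin (n + 1) → ℝ) → ℝ≥0∞}
    (hφ : Measurable φ) : ∫⁻ x, φ x = ∫⁻ s, ∫⁻ x : Fin n → ℝ, φ (Fin.cons s x) := by
  set e := MeasurableEquiv.piFinSuccAbove (fun _ : Fin (n + 1) => ℝ) 0
  rw [← ((volume_preserving_piFinSuccAbove (fun _ : Fin (n + 1) => ℝ) 0).symm).lintegral_comp hφ,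
    Measure.volume_eq_prod,
    lintegral_prod (fun p => φ (e.symm p)) (hφ.comp e.symm.measurable).aemeasurable]
  simp only [e, MeasurableEquiv.piFinSuccAbove_symm_apply, Fin.insertNthEquiv_zero]
  rfl

section PrekopaLeindler

variable {t : ℝ}

theorem prekopa_leindler_superlevel (ht0 : 0 < t) (ht1 : t < 1) {f g h : ℝ → ℝ≥0∞}
    (hf : Measurable f) (hg : Measurable g)
    (hfgh : ∀ x y, f x ^ (1 - t) * g y ^ t ≤ h ((1 - t) • x + t • y))
    {ρ : ℝ≥0∞} (hρ0 : ρ ≠ 0) (hρ : ρ ≠ ∞)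
    (hf' : {x | ρ < f x}.Nonempty) (hg' : {x | ρ < g x}.Nonempty) :
    ENNReal.ofReal (1 - t) * volume {x | ρ < f x} + ENNReal.ofReal t * volume {x | ρ < g x}
      ≤ volume {x | ρ < h x} := by
  have h1t : 0 < 1 - t := by linarith
  have hsub : (1 - t) • {x | ρ < f x} + t • {x | ρ < g x} ⊆ {x | ρ < h x} := by
    rintro _ ⟨_, ⟨x, hx, rfl⟩, _, ⟨y, hy, rfl⟩, rfl⟩
    calc ρ = ρ ^ (1 - t) * ρ ^ t := by rw [← ENNReal.rpow_add _ _ hρ0 hρ]; simp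
      _ < f x ^ (1 - t) * g y ^ t :=
        ENNReal.mul_lt_mul (ENNReal.rpow_lt_rpow hx h1t) (ENNReal.rpow_lt_rpow hy ht0)
      _ ≤ h _ := hfgh x y
  have hvol {s : ℝ} (hs : 0 ≤ s) (S : Set ℝ) : volume (s • S) = ENNReal.ofReal s * volume S := by
    rw [Measure.addHaar_smul_of_nonneg volume hs, Module.finrank_self, pow_one]
  rw [← hvol h1t.le, ← hvol ht0.le]
  exact Real.volume_add_volume_le_of_measurableSet
    ((hf measurableSet_Ioi).const_smul₀ (1 - t)) hf'.smul_set
    ((hg measurableSet_Ioi).const_smul₀ t) hg'.smul_set hsub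

theorem prekopa_leindler_real_of_iSup_eq_one (ht0 : 0 < t) (ht1 : t < 1) {f g h : ℝ → ℝ≥0∞}
    (hf : Measurable f) (hg : Measurable g) (hh : Measurable h)
    (hf1 : ⨆ x, f x = 1) (hg1 : ⨆ x, g x = 1)
    (hfgh : ∀ x y, f x ^ (1 - t) * g y ^ t ≤ h ((1 - t) • x + t • y)) :
    ENNReal.ofReal (1 - t) * (∫⁻ x, f x) + ENNReal.ofReal t * ∫⁻ x, g x ≤ ∫⁻ x, h x := by
  have h1t : 0 < 1 - t := by linarith
  have hf_le (x) : f x ≤ 1 := hf1 ▸ le_iSup f x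
  have hg_le (x) : g x ≤ 1 := hg1 ▸ le_iSup g x
  have hfgh' (x y) : f x ^ (1 - t) * g y ^ t ≤ min (h ((1 - t) • x + t • y)) 1 :=
    le_min (hfgh x y)
      (mul_le_one' (ENNReal.rpow_le_one (hf_le x) h1t.le) (ENNReal.rpow_le_one (hg_le y) ht0.le))
  have hlevel : ∀ r ∈ Ioi (0 : ℝ),
      ENNReal.ofReal (1 - t) * volume {x | ENNReal.ofReal r < f x}
        + ENNReal.ofReal t * volume {x | ENNReal.ofReal r < g x}
        ≤ volume {x | ENNReal.ofReal r < min (h x) 1} := by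
    intro r hr
    rcases lt_or_ge r 1 with hr1 | hr1
    · have hne {φ : ℝ → ℝ≥0∞} (hφ : ⨆ x, φ x = 1) : {x | ENNReal.ofReal r < φ x}.Nonempty :=
        lt_iSup_iff.1 (hφ.symm ▸ ENNReal.ofReal_lt_one.2 hr1 : ENNReal.ofReal r < ⨆ x, φ x)
      exact prekopa_leindler_superlevel ht0 ht1 hf hg hfgh' (ENNReal.ofReal_pos.2 hr).ne'
        ENNReal.ofReal_ne_top (hne hf1) (hne hg1)
    · have hempty {φ : ℝ → ℝ≥0∞} (hφ : ∀ x, φ x ≤ 1) : {x | ENNReal.ofReal r < φ x} = ∅ :=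
        eq_empty_of_forall_notMem fun x hx =>
          (hφ x).not_gt (lt_of_le_of_lt (ENNReal.one_le_ofReal.2 hr1) hx)
      simp [hempty hf_le, hempty hg_le]
  have hfin {φ : ℝ → ℝ≥0∞} (hφ : ∀ x, φ x ≤ 1) (x : ℝ) : φ x ≠ ∞ :=
    ne_top_of_le_ne_top ENNReal.one_ne_top (hφ x)
  calc ENNReal.ofReal (1 - t) * (∫⁻ x, f x) + ENNReal.ofReal t * ∫⁻ x, g x
      = ENNReal.ofReal (1 - t) * (∫⁻ r in Ioi 0, volume {x | ENNReal.ofReal r < f x})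
          + ENNReal.ofReal t * ∫⁻ r in Ioi 0, volume {x | ENNReal.ofReal r < g x} := by
        rw [lintegral_eq_lintegral_meas_ofReal_lt _ hf.aemeasurable (hfin hf_le),
          lintegral_eq_lintegral_meas_ofReal_lt _ hg.aemeasurable (hfin hg_le)]
    _ ≤ ∫⁻ r in Ioi 0, (ENNReal.ofReal (1 - t) * volume {x | ENNReal.ofReal r < f x}
          + ENNReal.ofReal t * volume {x | ENNReal.ofReal r < g x}) :=
        (add_le_add (lintegral_const_mul_le _ _) (lintegral_const_mul_le _ _)).trans
          (le_lintegral_add _ _)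
    _ ≤ ∫⁻ r in Ioi 0, volume {x | ENNReal.ofReal r < min (h x) 1} :=
        setLIntegral_mono' measurableSet_Ioi hlevel
    _ = ∫⁻ x, min (h x) 1 := (lintegral_eq_lintegral_meas_ofReal_lt _
          (hh.min measurable_const).aemeasurable (hfin fun _ => min_le_right _ _)).symm
    _ ≤ ∫⁻ x, h x := lintegral_mono fun x => min_le_left _ _

theorem prekopa_leindler_real_of_iSup_ne_top (ht0 : 0 < t) (ht1 : t < 1) {f g h : ℝ → ℝ≥0∞}
    (hf : Measurable f) (hg : Measurable g) (hh : Measurable h)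
    (hf_top : ⨆ x, f x ≠ ∞) (hg_top : ⨆ x, g x ≠ ∞)
    (hfgh : ∀ x y, f x ^ (1 - t) * g y ^ t ≤ h ((1 - t) • x + t • y)) :
    (∫⁻ x, f x) ^ (1 - t) * (∫⁻ x, g x) ^ t ≤ ∫⁻ x, h x := by
  have h1t : 0 < 1 - t := by linarith
  set Sf := ⨆ x, f x
  set Sg := ⨆ x, g x
  rcases eq_or_ne Sf 0 with hSf | hSf
  · simp [ENNReal.iSup_eq_zero.1 hSf, ENNReal.zero_rpow_of_pos h1t]
  rcases eq_or_ne Sg 0 with hSg | hSg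
  · simp [ENNReal.iSup_eq_zero.1 hSg, ENNReal.zero_rpow_of_pos ht0]
  set c := Sf⁻¹ ^ (1 - t) * Sg⁻¹ ^ t
  have hc0 : c ≠ 0 := mul_ne_zero (ENNReal.rpow_pos (ENNReal.inv_pos.2 hf_top)
    (ENNReal.inv_ne_top.2 hSf)).ne' (ENNReal.rpow_pos (ENNReal.inv_pos.2 hg_top)
    (ENNReal.inv_ne_top.2 hSg)).ne'
  have hc_top : c ≠ ∞ := ENNReal.mul_ne_top
    (ENNReal.rpow_ne_top_of_nonneg h1t.le (ENNReal.inv_ne_top.2 hSf))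
    (ENNReal.rpow_ne_top_of_nonneg ht0.le (ENNReal.inv_ne_top.2 hSg))
  have key := prekopa_leindler_real_of_iSup_eq_one ht0 ht1
    (hf.const_mul Sf⁻¹) (hg.const_mul Sg⁻¹) (hh.const_mul c)
    (by rw [← ENNReal.mul_iSup, ENNReal.inv_mul_cancel hSf hf_top])
    (by rw [← ENNReal.mul_iSup, ENNReal.inv_mul_cancel hSg hg_top])
    (fun x y => by
      rw [ENNReal.mul_rpow_mul_mul_rpow _ _ _ _ h1t.le ht0.le]
      exact mul_le_mul_right (hfgh x y) c)
  rw [lintegral_const_mul _ hf, lintegral_const_mul _ hg, lintegral_const_mul _ hh] at key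
  rw [← ENNReal.mul_le_mul_iff_right hc0 hc_top]
  calc c * ((∫⁻ x, f x) ^ (1 - t) * (∫⁻ x, g x) ^ t)
      = (Sf⁻¹ * ∫⁻ x, f x) ^ (1 - t) * (Sg⁻¹ * ∫⁻ x, g x) ^ t :=
        (ENNReal.mul_rpow_mul_mul_rpow _ _ _ _ h1t.le ht0.le).symm
    _ ≤ ENNReal.ofReal (1 - t) * (Sf⁻¹ * ∫⁻ x, f x) + ENNReal.ofReal t * (Sg⁻¹ * ∫⁻ x, g x) :=
        ENNReal.rpow_one_sub_mul_rpow_le ht0 ht1 _ _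
    _ ≤ c * ∫⁻ x, h x := key

theorem prekopa_leindler_real (ht0 : 0 < t) (ht1 : t < 1) {f g h : ℝ → ℝ≥0∞}
    (hf : Measurable f) (hg : Measurable g) (hh : Measurable h)
    (hfgh : ∀ x y, f x ^ (1 - t) * g y ^ t ≤ h ((1 - t) • x + t • y)) :
    (∫⁻ x, f x) ^ (1 - t) * (∫⁻ x, g x) ^ t ≤ ∫⁻ x, h x := by
  have h1t : 0 < 1 - t := by linarith
  have htrunc {φ : ℝ → ℝ≥0∞} (hφ : Measurable φ) :
      ⨆ M : ℕ, ∫⁻ x, min (φ x) M = ∫⁻ x, φ x := by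
    rw [← lintegral_iSup (fun M => hφ.min measurable_const)
      fun M N hMN x => min_le_min_left _ (Nat.cast_le.2 hMN)]
    congr with x
    rw [← inf_iSup_eq, ENNReal.iSup_natCast, inf_top_eq]
  have hsup_top (φ : ℝ → ℝ≥0∞) (M : ℕ) : ⨆ x, min (φ x) M ≠ ∞ :=
    ne_top_of_le_ne_top (ENNReal.natCast_ne_top M) (iSup_le fun _ => min_le_right _ _)
  rw [← htrunc hf, ← htrunc hg, ENNReal.iSup_rpow _ h1t, ENNReal.iSup_rpow _ ht0,
    ENNReal.iSup_mul, iSup_le_iff]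
  intro M
  rw [ENNReal.mul_iSup, iSup_le_iff]
  intro N
  exact prekopa_leindler_real_of_iSup_ne_top ht0 ht1 (hf.min measurable_const)
    (hg.min measurable_const) hh (hsup_top f M) (hsup_top g N) fun x y =>
      (mul_le_mul' (ENNReal.rpow_le_rpow (min_le_left _ _) h1t.le)
        (ENNReal.rpow_le_rpow (min_le_left _ _) ht0.le)).trans (hfgh x y)

theorem prekopa_leindler (ht0 : 0 < t) (ht1 : t < 1) {n : ℕ}
    {f g h : (Fin n → ℝ) → ℝ≥0∞} (hf : Measurable f) (hg : Measurable g) (hh : Measurable h)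
    (hfgh : ∀ x y, f x ^ (1 - t) * g y ^ t ≤ h ((1 - t) • x + t • y)) :
    (∫⁻ x, f x) ^ (1 - t) * (∫⁻ x, g x) ^ t ≤ ∫⁻ x, h x := by
  induction n with
  | zero =>
    simp only [lintegral_unique, volume_pi, Measure.pi_univ, Finset.univ_eq_empty,
      Finset.prod_empty, mul_one]
    convert hfgh default default
  | succ n ih =>
    have hslice {φ : (Fin (n + 1) → ℝ) → ℝ≥0∞} (hφ : Measurable φ) (s : ℝ) :
        Measurable fun x : Fin n → ℝ => φ (Fin.cons s x) :=
      hφ.comp (measurable_fin_cons_uncurry.comp measurable_prodMk_left)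
    have hfibre {φ : (Fin (n + 1) → ℝ) → ℝ≥0∞} (hφ : Measurable φ) :
        Measurable fun s : ℝ => ∫⁻ x : Fin n → ℝ, φ (Fin.cons s x) :=
      (hφ.comp measurable_fin_cons_uncurry).lintegral_prod_right'
    rw [lintegral_fin_cons hf, lintegral_fin_cons hg, lintegral_fin_cons hh]
    refine prekopa_leindler_real ht0 ht1 (hfibre hf) (hfibre hg) (hfibre hh) fun s₀ s₁ =>
      ih (hslice hf s₀) (hslice hg s₁) (hslice hh _) fun x y => ?_
    have hcons : (1 - t) • (Fin.cons s₀ x : Fin (n + 1) → ℝ) + t • Fin.cons s₁ y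
        = Fin.cons ((1 - t) • s₀ + t • s₁) ((1 - t) • x + t • y) := by
      ext i
      cases i using Fin.cases <;> simp
    exact hcons ▸ hfgh _ _

theorem brunn_minkowski_mul (ht0 : 0 < t) (ht1 : t < 1) {n : ℕ}
    {X Y : Set (Fin n → ℝ)} (hX : MeasurableSet X) (hY : MeasurableSet Y)
    (hXY : MeasurableSet ((1 - t) • X + t • Y)) :
    volume X ^ (1 - t) * volume Y ^ t ≤ volume ((1 - t) • X + t • Y) := by
  have h1t : 0 < 1 - t := by linarith
  have key := prekopa_leindler (f := X.indicator 1) (g := Y.indicator 1)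
    (h := ((1 - t) • X + t • Y).indicator 1) ht0 ht1 (measurable_one.indicator hX)
    (measurable_one.indicator hY) (measurable_one.indicator hXY) fun x y => by
      by_cases hx : x ∈ X
      · by_cases hy : y ∈ Y
        · simp [hx, hy, add_mem_add (smul_mem_smul_set hx) (smul_mem_smul_set hy)]
        · simp [hy, ENNReal.zero_rpow_of_pos ht0]
      · simp [hx, ENNReal.zero_rpow_of_pos h1t]
  rwa [lintegral_indicator_one hX, lintegral_indicator_one hY, lintegral_indicator_one hXY] at key

end PrekopaLeindler

section BrunnMinkowski

variable {n : ℕ}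

theorem toReal_volume_smul {r : ℝ} (hr : 0 ≤ r) (S : Set (Fin n → ℝ)) :
    (volume (r • S)).toReal = r ^ n * (volume S).toReal := by
  rw [Measure.addHaar_smul_of_nonneg _ hr, Module.finrank_fin_fun, ENNReal.toReal_mul,
    ENNReal.toReal_ofReal (by positivity)]

theorem mul_toReal_volume_rpow_inv_pow (hn : n ≠ 0) {r : ℝ} (hr : 0 ≤ r) (S : Set (Fin n → ℝ)) :
    (r * (volume S).toReal ^ (n⁻¹ : ℝ)) ^ n = (volume (r • S)).toReal := by
  rw [mul_pow, Real.rpow_inv_natCast_pow ENNReal.toReal_nonneg hn, toReal_volume_smul hr]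

theorem brunn_minkowski_pow_of_pos (hn : n ≠ 0) {X Y : Set (Fin n → ℝ)} (hX : IsCompact X)
    (hY : IsCompact Y) {a b : ℝ} (ha : 0 ≤ a) (hb : 0 ≤ b)
    (hp : 0 < a * (volume X).toReal ^ (n⁻¹ : ℝ)) (hq : 0 < b * (volume Y).toReal ^ (n⁻¹ : ℝ)) :
    (a * (volume X).toReal ^ (n⁻¹ : ℝ) + b * (volume Y).toReal ^ (n⁻¹ : ℝ)) ^ n
      ≤ (volume (a • X + b • Y)).toReal := by
  set α := (volume X).toReal ^ (n⁻¹ : ℝ)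
  set β := (volume Y).toReal ^ (n⁻¹ : ℝ)
  set w := a * α + b * β
  have hα : 0 < α := pos_of_mul_pos_right hp ha
  have hβ : 0 < β := pos_of_mul_pos_right hq hb
  have hw : 0 < w := by positivity
  -- `(w / α) • X` and `(w / β) • Y` both have volume `w ^ n`, and `a • X + b • Y` is their
  -- `(1 - θ, θ)` combination.
  set θ := b * β / w
  have hθ0 : 0 < θ := by positivity
  have hθ1 : θ < 1 := (div_lt_one hw).2 (by linarith)
  have hcX : (volume ((w / α) • X)).toReal = w ^ n := by
    rw [← mul_toReal_volume_rpow_inv_pow hn (by positivity), div_mul_cancel₀ _ hα.ne']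
  have hdY : (volume ((w / β) • Y)).toReal = w ^ n := by
    rw [← mul_toReal_volume_rpow_inv_pow hn (by positivity), div_mul_cancel₀ _ hβ.ne']
  have hZ : a • X + b • Y = (1 - θ) • (w / α) • X + θ • (w / β) • Y := by
    rw [smul_smul, smul_smul]
    congr 2 <;> simp only [θ, w] <;> field_simp
    ring
  have hZc : IsCompact (a • X + b • Y) := (hX.smul a).add (hY.smul b)
  have key := brunn_minkowski_mul hθ0 hθ1 (hX.smul _).measurableSet (hY.smul _).measurableSet
    (hZ ▸ hZc.measurableSet)
  rw [← hZ] at key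
  calc w ^ n = (w ^ n) ^ (1 - θ) * (w ^ n) ^ θ := by
        rw [← Real.rpow_add (by positivity), sub_add_cancel, Real.rpow_one]
    _ = (volume ((w / α) • X) ^ (1 - θ) * volume ((w / β) • Y) ^ θ).toReal := by
        rw [ENNReal.toReal_mul, ← ENNReal.toReal_rpow, ← ENNReal.toReal_rpow, hcX, hdY]
    _ ≤ (volume (a • X + b • Y)).toReal := ENNReal.toReal_mono hZc.measure_lt_top.ne key

theorem brunn_minkowski (hn : n ≠ 0) {X Y : Set (Fin n → ℝ)} (hX : IsCompact X)
    (hY : IsCompact Y) (hX' : X.Nonempty) (hY' : Y.Nonempty) {a b : ℝ} (ha : 0 ≤ a)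
    (hb : 0 ≤ b) :
    a * (volume X).toReal ^ (n⁻¹ : ℝ) + b * (volume Y).toReal ^ (n⁻¹ : ℝ)
      ≤ (volume (a • X + b • Y)).toReal ^ (n⁻¹ : ℝ) := by
  have hZ : volume (a • X + b • Y) ≠ ∞ := ((hX.smul a).add (hY.smul b)).measure_lt_top.ne
  have hp : (a * (volume X).toReal ^ (n⁻¹ : ℝ)) ^ n ≤ (volume (a • X + b • Y)).toReal := by
    rw [mul_toReal_volume_rpow_inv_pow hn ha]
    exact ENNReal.toReal_mono hZ
      (add_comm (b • Y) (a • X) ▸ measure_le_measure_add_left _ hY'.smul_set)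
  have hq : (b * (volume Y).toReal ^ (n⁻¹ : ℝ)) ^ n ≤ (volume (a • X + b • Y)).toReal := by
    rw [mul_toReal_volume_rpow_inv_pow hn hb]
    exact ENNReal.toReal_mono hZ (measure_le_measure_add_left _ hX'.smul_set)
  rw [Real.le_rpow_inv_iff_of_pos (by positivity) ENNReal.toReal_nonneg (by positivity),
    Real.rpow_natCast]
  rcases (show 0 ≤ a * (volume X).toReal ^ (n⁻¹ : ℝ) by positivity).eq_or_lt with hp0 | hp0
  · rwa [← hp0, zero_add]
  rcases (show 0 ≤ b * (volume Y).toReal ^ (n⁻¹ : ℝ) by positivity).eq_or_lt with hq0 | hq0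
  · rwa [← hq0, add_zero]
  exact brunn_minkowski_pow_of_pos hn hX hY ha hb hp0 hq0

end BrunnMinkowski

theorem brunn_minkowski_power_concave (n : ℕ) (hn : 0 < n)
    (A₀ A₁ : Set (Fin n → ℝ))
    (h₀c : IsCompact A₀) (h₀conv : Convex ℝ A₀) (h₀i : (interior A₀).Nonempty)
    (h₁c : IsCompact A₁) (h₁conv : Convex ℝ A₁) (h₁i : (interior A₁).Nonempty) :
    ConcaveOn ℝ (Set.Icc (0:ℝ) 1)
      (fun t : ℝ => (volume (t • A₁ + (1 - t) • A₀)).toReal ^ ((1:ℝ) / n)) := by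
  have hA_compact (s : ℝ) : IsCompact (s • A₁ + (1 - s) • A₀) :=
    (h₁c.smul s).add (h₀c.smul (1 - s))
  have hA_nonempty (s : ℝ) : (s • A₁ + (1 - s) • A₀).Nonempty :=
    (h₁i.mono interior_subset).smul_set.add (h₀i.mono interior_subset).smul_set
  refine ⟨convex_Icc 0 1, fun u hu v hv a b ha hb hab => ?_⟩
  have hA_comb : a • (u • A₁ + (1 - u) • A₀) + b • (v • A₁ + (1 - v) • A₀)
      = (a * u + b * v) • A₁ + (1 - (a * u + b * v)) • A₀ := by
    rw [smul_add, smul_add, smul_smul, smul_smul, smul_smul, smul_smul, add_add_add_comm,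
      ← h₁conv.add_smul (by nlinarith [hu.1]) (by nlinarith [hv.1]),
      ← h₀conv.add_smul (by nlinarith [hu.2]) (by nlinarith [hv.2])]
    congr 2
    linear_combination hab
  simp only [smul_eq_mul, one_div, ← hA_comb]
  exact brunn_minkowski hn.ne' (hA_compact u) (hA_compact v) (hA_nonempty u) (hA_nonempty v) ha hb
end

section
/- (Prékopa's theorem) Let φ : ℝ^(n+1) = ℝ_t × ℝⁿ_x → ℝ be a convex function such that ∫_{ℝⁿ} e^{−φ(t,x)} dx is finite for all t. Then the function φ̃(t) := −log ∫_{ℝⁿ} e^{−φ(t,x)} dx is convex on ℝ. -/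
open MeasureTheory Set Pointwise
open scoped ENNReal

/-!
For `a + b = 1`, convexity of `φ` says exactly that `f = e^{-φ(t, ·)}`, `g = e^{-φ(s, ·)}` and
`h = e^{-φ(a t + b s, ·)}` satisfy `f x ^ a * g y ^ b ≤ h (a x + b y)`, so the Prékopa–Leindler
inequality gives `I (a t + b s) ≥ I t ^ a * I s ^ b` for `I t = ∫ e^{-φ(t, x)} dx`, i.e. `-log I` is
convex.

Prékopa–Leindler on `ℝ` follows from the one-dimensional Brunn–Minkowski inequality
`|A| + |B| ≤ |A + B|`: after normalizing `sup f = sup g = 1`, the superlevel set `{h ≥ r}`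
contains `a {f ≥ r} + b {g ≥ r}` for `r < 1`, and integrating over `r` (layer cake) gives
`a ∫ f + b ∫ g ≤ ∫ h`, which dominates `(∫ f) ^ a * (∫ g) ^ b` by AM–GM. The inequality
passes to products by Fubini, hence to `ℝⁿ`.
-/

/-- The translates `K + min L` and `max K + L` of `K` and `L` lie in `K + L` and meet only in
`max K + min L`. -/
theorem Real.volume_add_volume_le_volume_add_of_isCompact {K L : Set ℝ} (hK : IsCompact K)
    (hL : IsCompact L) (hKne : K.Nonempty) (hLne : L.Nonempty) :
    volume K + volume L ≤ volume (K + L) := by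
  set a := sSup K
  set b := sInf L
  have haK : a ∈ K := hK.sSup_mem hKne
  have hbL : b ∈ L := hL.sInf_mem hLne
  have hdisj : Disjoint ((· + b) '' K) ((a + ·) '' L \ {a + b}) := by
    rw [Set.disjoint_left]
    rintro _ ⟨x, hx, rfl⟩ ⟨⟨y, hy, hxy⟩, hne⟩
    have : x ≤ a := le_csSup hK.bddAbove hx
    have : b ≤ y := csInf_le hL.bddBelow hy
    have hxy : a + y = x + b := hxy
    exact hne (by rw [show x = a by linarith]; rfl)
  have hsub : (· + b) '' K ∪ ((a + ·) '' L \ {a + b}) ⊆ K + L := by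
    rintro _ (⟨x, hx, rfl⟩ | ⟨⟨y, hy, rfl⟩, -⟩)
    · exact add_mem_add hx hbL
    · exact add_mem_add haK hy
  calc volume K + volume L
      = volume ((· + b) '' K) + volume ((a + ·) '' L \ {a + b}) := by
        rw [image_add_right, measure_preimage_add_right, measure_sdiff_null (measure_singleton _),
          image_add_left, measure_preimage_add]
    _ = volume ((· + b) '' K ∪ ((a + ·) '' L \ {a + b})) :=
        (measure_union hdisj
          ((hL.image (continuous_const_add a)).isClosed.measurableSet.diff
            (measurableSet_singleton _))).symm
    _ ≤ volume (K + L) := measure_mono hsub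

theorem Real.volume_add_volume_le_volume_add {A B : Set ℝ} (hA : MeasurableSet A)
    (hB : MeasurableSet B) (hAne : A.Nonempty) (hBne : B.Nonempty) :
    volume A + volume B ≤ volume (A + B) := by
  obtain ⟨x, hx⟩ := hAne
  obtain ⟨y, hy⟩ := hBne
  rw [hA.measure_eq_iSup_isCompact, hB.measure_eq_iSup_isCompact]
  simp only [iSup_and']
  refine ENNReal.biSup_add_biSup_le' ⟨∅, empty_subset _, isCompact_empty⟩
    ⟨∅, empty_subset _, isCompact_empty⟩ fun K ⟨hKA, hK⟩ L ⟨hLB, hL⟩ => ?_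
  calc volume K + volume L ≤ volume (insert x K) + volume (insert y L) := by
        gcongr <;> exact subset_insert _ _
    _ ≤ volume (insert x K + insert y L) :=
        Real.volume_add_volume_le_volume_add_of_isCompact (hK.insert x) (hL.insert y)
          (insert_nonempty _ _) (insert_nonempty _ _)
    _ ≤ volume (A + B) :=
        measure_mono (add_subset_add (insert_subset hx hKA) (insert_subset hy hLB))

theorem Real.ofReal_mul_volume_add_ofReal_mul_volume_le {a b : ℝ} (ha : 0 < a) (hb : 0 < b)
    {A B : Set ℝ} (hA : MeasurableSet A) (hB : MeasurableSet B) (hAne : A.Nonempty)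
    (hBne : B.Nonempty) :
    ENNReal.ofReal a * volume A + ENNReal.ofReal b * volume B ≤ volume (a • A + b • B) := by
  have hsmul : ∀ {c : ℝ}, 0 < c → ∀ s : Set ℝ, volume (c • s) = ENNReal.ofReal c * volume s :=
    fun hc s => by simp [Measure.addHaar_smul_of_nonneg volume hc.le s]
  rw [← hsmul ha, ← hsmul hb]
  exact Real.volume_add_volume_le_volume_add (hA.const_smul₀ a) (hB.const_smul₀ b)
    (hAne.smul_set) (hBne.smul_set)

theorem ENNReal.min_le_rpow_mul_rpow {a b : ℝ} (ha : 0 ≤ a) (hb : 0 ≤ b) (hab : a + b = 1)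
    (u v : ℝ≥0∞) : min u v ≤ u ^ a * v ^ b :=
  calc min u v = min u v ^ a * min u v ^ b := by
        rw [← ENNReal.rpow_add_of_nonneg _ _ ha hb, hab, ENNReal.rpow_one]
    _ ≤ u ^ a * v ^ b := by gcongr <;> simp

theorem ENNReal.rpow_mul_rpow_le_add {a b : ℝ} (ha : 0 < a) (hb : 0 < b) (hab : a + b = 1)
    (u v : ℝ≥0∞) : u ^ a * v ^ b ≤ ENNReal.ofReal a * u + ENNReal.ofReal b * v := by
  rcases eq_top_or_lt_top u with rfl | hu
  · simp [ha]
  rcases eq_top_or_lt_top v with rfl | hv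
  · simp [hb]
  lift u to NNReal using hu.ne
  lift v to NNReal using hv.ne
  have := NNReal.geom_mean_le_arith_mean2_weighted ⟨a, ha.le⟩ ⟨b, hb.le⟩ u v (NNReal.eq hab)
  rw [← ENNReal.coe_rpow_of_nonneg _ ha.le, ← ENNReal.coe_rpow_of_nonneg _ hb.le,
    ENNReal.ofReal, ENNReal.ofReal, Real.toNNReal_of_nonneg ha.le, Real.toNNReal_of_nonneg hb.le]
  exact_mod_cast this

theorem ENNReal.iSup_rpow_s4 {ι : Sort*} (u : ι → ℝ≥0∞) {a : ℝ} (ha : 0 < a) :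
    (⨆ n, u n) ^ a = ⨆ n, u n ^ a :=
  Monotone.map_iSup_of_continuousAt (ENNReal.continuous_rpow_const.continuousAt)
    (fun _ _ h => ENNReal.rpow_le_rpow h ha.le) (ENNReal.zero_rpow_of_pos ha)

theorem lintegral_eq_iSup_lintegral_min_natCast {α : Type*} [MeasurableSpace α] (μ : Measure α)
    {f : α → ℝ≥0∞} (hf : Measurable f) : ∫⁻ x, f x ∂μ = ⨆ n : ℕ, ∫⁻ x, min (f x) n ∂μ := by
  rw [← lintegral_iSup (fun n => hf.min measurable_const)
    fun m n hmn x => min_le_min_left _ (Nat.cast_le.mpr hmn)]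
  simp only [← inf_iSup_eq, ENNReal.iSup_natCast, inf_top_eq]

theorem lintegral_eq_lintegral_meas_ofReal_le {α : Type*} [MeasurableSpace α] (μ : Measure α)
    {f : α → ℝ≥0∞} (hf : AEMeasurable f μ) (hf_top : ∀ x, f x ≠ ∞) :
    ∫⁻ x, f x ∂μ = ∫⁻ t in Ioi 0, μ {x | ENNReal.ofReal t ≤ f x} := by
  have := lintegral_eq_lintegral_meas_le μ (Filter.Eventually.of_forall fun x =>
    ENNReal.toReal_nonneg (a := f x)) hf.ennreal_toReal
  simp only [ENNReal.ofReal_toReal (hf_top _)] at this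
  simp only [this, ENNReal.ofReal_le_iff_le_toReal (hf_top _)]

theorem ofReal_mul_lintegral_add_ofReal_mul_lintegral_le {a b : ℝ} (ha : 0 < a) (hb : 0 < b)
    {f g h : ℝ → ℝ≥0∞} (hf : Measurable f) (hg : Measurable g) (hh : Measurable h)
    (hf_sup : ⨆ x, f x = 1) (hg_sup : ⨆ x, g x = 1)
    (hfgh : ∀ x y, min (f x) (g y) ≤ h (a * x + b * y)) :
    ENNReal.ofReal a * (∫⁻ x, f x) + ENNReal.ofReal b * (∫⁻ x, g x) ≤ ∫⁻ x, h x := by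
  have hf_le : ∀ x, f x ≤ 1 := fun x => hf_sup ▸ le_iSup f x
  have hg_le : ∀ x, g x ≤ 1 := fun x => hg_sup ▸ le_iSup g x
  have hmeas : ∀ u : ℝ → ℝ≥0∞, Measurable fun t : ℝ => volume {x | ENNReal.ofReal t ≤ u x} :=
    fun u => Antitone.measurable fun s t hst => measure_mono fun x hx =>
      (ENNReal.ofReal_le_ofReal hst).trans hx
  have hlevel : ∀ᵐ t ∂volume.restrict (Ioi (0 : ℝ)),
      ENNReal.ofReal a * volume {x | ENNReal.ofReal t ≤ f x} +
        ENNReal.ofReal b * volume {x | ENNReal.ofReal t ≤ g x} ≤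
      volume {x | ENNReal.ofReal t ≤ min (h x) 1} := by
    filter_upwards [Measure.ae_ne _ 1] with t ht
    rcases ht.lt_or_gt with ht | ht
    · have hlt : ENNReal.ofReal t < 1 := ENNReal.ofReal_lt_one.mpr ht
      have hne : ∀ u : ℝ → ℝ≥0∞, ⨆ x, u x = 1 → {x | ENNReal.ofReal t ≤ u x}.Nonempty :=
        fun u hu => let ⟨x, hx⟩ := lt_iSup_iff.mp (hu ▸ hlt); ⟨x, hx.le⟩
      refine (Real.ofReal_mul_volume_add_ofReal_mul_volume_le ha hb (hf measurableSet_Ici)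
        (hg measurableSet_Ici) (hne f hf_sup) (hne g hg_sup)).trans (measure_mono ?_)
      rintro _ ⟨_, ⟨x, hx, rfl⟩, _, ⟨y, hy, rfl⟩, rfl⟩
      exact le_min ((le_min hx hy).trans (hfgh x y)) hlt.le
    · have hempty : ∀ u : ℝ → ℝ≥0∞, (∀ x, u x ≤ 1) → {x | ENNReal.ofReal t ≤ u x} = ∅ :=
        fun u hu => eq_empty_of_forall_notMem fun x hx =>
          (hx.trans (hu x)).not_gt (ENNReal.one_lt_ofReal.mpr ht)
      simp [hempty f hf_le, hempty g hg_le]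
  have hfin : ∀ u : ℝ → ℝ≥0∞, (∀ x, u x ≤ 1) → ∀ x, u x ≠ ∞ :=
    fun u hu x => ne_top_of_le_ne_top ENNReal.one_ne_top (hu x)
  calc ENNReal.ofReal a * (∫⁻ x, f x) + ENNReal.ofReal b * (∫⁻ x, g x)
      = ∫⁻ t in Ioi 0, (ENNReal.ofReal a * volume {x | ENNReal.ofReal t ≤ f x} +
          ENNReal.ofReal b * volume {x | ENNReal.ofReal t ≤ g x}) := by
        rw [lintegral_add_left ((hmeas f).const_mul _), lintegral_const_mul _ (hmeas f),
          lintegral_const_mul _ (hmeas g),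
          lintegral_eq_lintegral_meas_ofReal_le volume hf.aemeasurable (hfin f hf_le),
          lintegral_eq_lintegral_meas_ofReal_le volume hg.aemeasurable (hfin g hg_le)]
    _ ≤ ∫⁻ t in Ioi 0, volume {x | ENNReal.ofReal t ≤ min (h x) 1} := lintegral_mono_ae hlevel
    _ = ∫⁻ x, min (h x) 1 := (lintegral_eq_lintegral_meas_ofReal_le _
          (hh.min measurable_const).aemeasurable (hfin _ fun _ => min_le_right _ _)).symm
    _ ≤ ∫⁻ x, h x := lintegral_mono fun _ => min_le_left _ _

theorem lintegral_rpow_mul_lintegral_rpow_le_of_iSup_ne_top {a b : ℝ} (ha : 0 < a) (hb : 0 < b)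
    (hab : a + b = 1) {f g h : ℝ → ℝ≥0∞} (hf : Measurable f) (hg : Measurable g)
    (hh : Measurable h) (hf_sup : ⨆ x, f x ≠ ∞) (hg_sup : ⨆ x, g x ≠ ∞)
    (hfgh : ∀ x y, f x ^ a * g y ^ b ≤ h (a * x + b * y)) :
    (∫⁻ x, f x) ^ a * (∫⁻ x, g x) ^ b ≤ ∫⁻ x, h x := by
  set F := ⨆ x, f x
  set G := ⨆ x, g x
  rcases eq_or_ne F 0 with hF | hF
  · simp [ENNReal.iSup_eq_zero.mp hF, ha]
  rcases eq_or_ne G 0 with hG | hG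
  · simp [ENNReal.iSup_eq_zero.mp hG, hb]
  have hFa0 : F ^ a ≠ 0 := (ENNReal.rpow_pos (pos_iff_ne_zero.2 hF) hf_sup).ne'
  have hGb0 : G ^ b ≠ 0 := (ENNReal.rpow_pos (pos_iff_ne_zero.2 hG) hg_sup).ne'
  have hFa_top : F ^ a ≠ ∞ := ENNReal.rpow_ne_top_of_nonneg ha.le hf_sup
  have hGb_top : G ^ b ≠ ∞ := ENNReal.rpow_ne_top_of_nonneg hb.le hg_sup
  set c := F ^ a * G ^ b
  have hc0 : c ≠ 0 := mul_ne_zero hFa0 hGb0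
  have hc_top : c ≠ ∞ := ENNReal.mul_ne_top hFa_top hGb_top
  have hnorm : ∀ u : ℝ → ℝ≥0∞, ⨆ x, u x ≠ 0 → ⨆ x, u x ≠ ∞ → ⨆ x, u x / ⨆ x, u x = 1 :=
    fun u h0 htop => by rw [← ENNReal.iSup_div, ENNReal.div_self h0 htop]
  have hdiv : ∀ u v : ℝ≥0∞, (u / F) ^ a * (v / G) ^ b = u ^ a * v ^ b / c := fun u v => by
    rw [ENNReal.div_rpow_of_nonneg _ _ ha.le, ENNReal.div_rpow_of_nonneg _ _ hb.le]
    simp only [div_eq_mul_inv, c, ENNReal.mul_inv (.inl hFa0) (.inl hFa_top)]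
    ring
  have hfgh' : ∀ x y, min (f x / F) (g y / G) ≤ h (a * x + b * y) / c := fun x y =>
    calc min (f x / F) (g y / G) ≤ (f x / F) ^ a * (g y / G) ^ b :=
          ENNReal.min_le_rpow_mul_rpow ha.le hb.le hab _ _
      _ ≤ h (a * x + b * y) / c := by rw [hdiv]; gcongr; exact hfgh x y
  have key := ofReal_mul_lintegral_add_ofReal_mul_lintegral_le ha hb (hf.div_const F)
    (hg.div_const G) (hh.div_const c) (hnorm f hF hf_sup) (hnorm g hG hg_sup) hfgh'
  have hint : ∀ {u : ℝ → ℝ≥0∞}, Measurable u → ∀ d, ∫⁻ x, u x / d = (∫⁻ x, u x) / d :=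
    fun hu d => by simp only [div_eq_mul_inv]; exact lintegral_mul_const _ hu
  rw [hint hf, hint hg, hint hh] at key
  calc (∫⁻ x, f x) ^ a * (∫⁻ x, g x) ^ b
      = (∫⁻ x, f x) ^ a * (∫⁻ x, g x) ^ b / c * c := (ENNReal.div_mul_cancel hc0 hc_top).symm
    _ ≤ (∫⁻ x, h x) / c * c := by
        rw [← hdiv]; gcongr; exact (ENNReal.rpow_mul_rpow_le_add ha hb hab _ _).trans key
    _ = ∫⁻ x, h x := ENNReal.div_mul_cancel hc0 hc_top

theorem lintegral_rpow_mul_lintegral_rpow_le {a b : ℝ} (ha : 0 < a) (hb : 0 < b)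
    (hab : a + b = 1) {f g h : ℝ → ℝ≥0∞} (hf : Measurable f) (hg : Measurable g)
    (hh : Measurable h) (hfgh : ∀ x y, f x ^ a * g y ^ b ≤ h (a * x + b * y)) :
    (∫⁻ x, f x) ^ a * (∫⁻ x, g x) ^ b ≤ ∫⁻ x, h x := by
  have htrunc : ∀ m n : ℕ, (∫⁻ x, min (f x) m) ^ a * (∫⁻ x, min (g x) n) ^ b ≤ ∫⁻ x, h x := by
    intro m n
    refine lintegral_rpow_mul_lintegral_rpow_le_of_iSup_ne_top ha hb hab
      (hf.min measurable_const) (hg.min measurable_const) hh ?_ ?_ fun x y => ?_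
    · exact ne_top_of_le_ne_top (ENNReal.natCast_ne_top m) (iSup_le fun x => min_le_right _ _)
    · exact ne_top_of_le_ne_top (ENNReal.natCast_ne_top n) (iSup_le fun x => min_le_right _ _)
    · exact le_trans (by gcongr <;> exact min_le_left _ _) (hfgh x y)
  rw [lintegral_eq_iSup_lintegral_min_natCast _ hf, lintegral_eq_iSup_lintegral_min_natCast _ hg,
    ENNReal.iSup_rpow_s4 _ ha, ENNReal.iSup_rpow_s4 _ hb, ENNReal.iSup_mul]
  exact iSup_le fun m => (ENNReal.mul_iSup _ _).trans_le (iSup_le fun n => htrunc m n)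

def SatisfiesPrekopaLeindler {E : Type*} [AddCommMonoid E] [Module ℝ E] [MeasurableSpace E]
    (μ : Measure E) : Prop :=
  ∀ ⦃a b : ℝ⦄, 0 < a → 0 < b → a + b = 1 → ∀ ⦃f g h : E → ℝ≥0∞⦄,
    Measurable f → Measurable g → Measurable h → (∀ x y, f x ^ a * g y ^ b ≤ h (a • x + b • y)) →
    (∫⁻ x, f x ∂μ) ^ a * (∫⁻ x, g x ∂μ) ^ b ≤ ∫⁻ x, h x ∂μ

namespace SatisfiesPrekopaLeindler

variable {E F : Type*} [AddCommMonoid E] [Module ℝ E] [MeasurableSpace E]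
  [AddCommMonoid F] [Module ℝ F] [MeasurableSpace F] {μ : Measure E} {ν : Measure F}

theorem volume_real : SatisfiesPrekopaLeindler (volume : Measure ℝ) :=
  fun _ _ ha hb hab _ _ _ hf hg hh hfgh =>
    lintegral_rpow_mul_lintegral_rpow_le ha hb hab hf hg hh hfgh

theorem dirac_zero : SatisfiesPrekopaLeindler (Measure.dirac (0 : E)) := by
  intro a b _ _ _ f g h hf hg hh hfgh
  simpa [lintegral_dirac' _ hf, lintegral_dirac' _ hg, lintegral_dirac' _ hh] using hfgh 0 0

theorem of_measurePreserving (hμ : SatisfiesPrekopaLeindler μ) (e : E →ₗ[ℝ] F)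
    (he : MeasurePreserving e μ ν) : SatisfiesPrekopaLeindler ν := by
  intro a b ha hb hab f g h hf hg hh hfgh
  rw [← he.lintegral_comp hf, ← he.lintegral_comp hg, ← he.lintegral_comp hh]
  refine hμ ha hb hab (hf.comp he.measurable) (hg.comp he.measurable) (hh.comp he.measurable)
    fun x y => ?_
  simpa using hfgh (e x) (e y)

theorem prod [SFinite ν] (hμ : SatisfiesPrekopaLeindler μ) (hν : SatisfiesPrekopaLeindler ν) :
    SatisfiesPrekopaLeindler (μ.prod ν) := by
  intro a b ha hb hab f g h hf hg hh hfgh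
  rw [lintegral_prod _ hf.aemeasurable, lintegral_prod _ hg.aemeasurable,
    lintegral_prod _ hh.aemeasurable]
  refine hμ ha hb hab hf.lintegral_prod_right' hg.lintegral_prod_right' hh.lintegral_prod_right'
    fun x₁ y₁ => hν ha hb hab (hf.comp measurable_prodMk_left) (hg.comp measurable_prodMk_left)
      (hh.comp measurable_prodMk_left) fun x₂ y₂ => hfgh (x₁, x₂) (y₁, y₂)

theorem integral_rpow_mul_integral_rpow_le (hμ : SatisfiesPrekopaLeindler μ) {a b : ℝ}
    (ha : 0 < a) (hb : 0 < b) (hab : a + b = 1) {f g h : E → ℝ} (hf : Measurable f)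
    (hg : Measurable g) (hh : Measurable h) (hf0 : ∀ x, 0 ≤ f x) (hg0 : ∀ x, 0 ≤ g x)
    (hh_int : Integrable h μ) (hfgh : ∀ x y, f x ^ a * g y ^ b ≤ h (a • x + b • y)) :
    (∫ x, f x ∂μ) ^ a * (∫ x, g x ∂μ) ^ b ≤ ∫ x, h x ∂μ := by
  have hh0 : ∀ z, 0 ≤ h z := fun z => by
    simpa [← add_smul, hab] using (mul_nonneg (Real.rpow_nonneg (hf0 z) a)
      (Real.rpow_nonneg (hg0 z) b)).trans (hfgh z z)
  have key := hμ ha hb hab hf.ennreal_ofReal hg.ennreal_ofReal hh.ennreal_ofReal fun x y => by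
    rw [ENNReal.ofReal_rpow_of_nonneg (hf0 x) ha.le, ENNReal.ofReal_rpow_of_nonneg (hg0 y) hb.le,
      ← ENNReal.ofReal_mul (Real.rpow_nonneg (hf0 x) a)]
    exact ENNReal.ofReal_le_ofReal (hfgh x y)
  rw [integral_eq_lintegral_of_nonneg_ae (.of_forall hf0) hf.aestronglyMeasurable,
    integral_eq_lintegral_of_nonneg_ae (.of_forall hg0) hg.aestronglyMeasurable,
    integral_eq_lintegral_of_nonneg_ae (.of_forall hh0) hh.aestronglyMeasurable]
  simpa only [ENNReal.toReal_mul, ENNReal.toReal_rpow] using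
    ENNReal.toReal_mono hh_int.lintegral_lt_top.ne key

end SatisfiesPrekopaLeindler

theorem measurePreserving_finConsLinearEquiv (n : ℕ) :
    MeasurePreserving (Fin.consLinearEquiv ℝ fun _ : Fin (n + 1) => ℝ) (volume.prod volume)
      volume := by
  have hcoe : ⇑(Fin.consLinearEquiv ℝ fun _ : Fin (n + 1) => ℝ) =
      (MeasurableEquiv.piFinSuccAbove (fun _ : Fin (n + 1) => ℝ) 0).symm := by
    ext p; simp
  rw [hcoe]
  exact (volume_preserving_piFinSuccAbove _ 0).symm

theorem satisfiesPrekopaLeindler_volume_pi (n : ℕ) :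
    SatisfiesPrekopaLeindler (volume : Measure (Fin n → ℝ)) := by
  induction n with
  | zero =>
    rw [volume_pi (ι := Fin 0) (α := fun _ => ℝ), Measure.pi_of_empty _ 0]
    exact SatisfiesPrekopaLeindler.dirac_zero
  | succ n ih =>
    exact (SatisfiesPrekopaLeindler.volume_real.prod ih).of_measurePreserving
      (Fin.consLinearEquiv ℝ fun _ => ℝ).toLinearMap (measurePreserving_finConsLinearEquiv n)

theorem convexOn_neg_log_of_rpow_mul_rpow_le {E : Type*} [AddCommMonoid E] [Module ℝ E]
    {s : Set E} (hs : Convex ℝ s) {F : E → ℝ} (hF : ∀ x ∈ s, 0 < F x)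
    (hFab : ∀ x ∈ s, ∀ y ∈ s, ∀ a b : ℝ, 0 < a → 0 < b → a + b = 1 →
      F x ^ a * F y ^ b ≤ F (a • x + b • y)) :
    ConvexOn ℝ s fun x => -Real.log (F x) := by
  refine convexOn_iff_forall_pos.mpr ⟨hs, fun x hx y hy a b ha hb hab => ?_⟩
  have hx₀ := hF x hx
  have hy₀ := hF y hy
  have := Real.log_le_log (by positivity) (hFab x hx y hy a b ha hb hab)
  rw [Real.log_mul (Real.rpow_pos_of_pos (hF x hx) a).ne' (Real.rpow_pos_of_pos (hF y hy) b).ne',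
    Real.log_rpow (hF x hx), Real.log_rpow (hF y hy)] at this
  simp only [smul_eq_mul]
  linarith

/-- Prékopa's theorem. -/
theorem prekopa (n : ℕ) (φ : ℝ × (Fin n → ℝ) → ℝ)
    (hφ : ConvexOn ℝ Set.univ φ)
    (hint : ∀ t : ℝ, Integrable (fun x : Fin n → ℝ => Real.exp (-φ (t, x)))) :
    ConvexOn ℝ Set.univ
      (fun t : ℝ => -Real.log (∫ x : Fin n → ℝ, Real.exp (-φ (t, x)))) := by
  have hφc : Continuous φ := continuousOn_univ.mp (hφ.continuousOn isOpen_univ)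
  have hmeas : ∀ t, Measurable fun x : Fin n → ℝ => Real.exp (-φ (t, x)) := fun t =>
    (hφc.comp (Continuous.prodMk_right t)).neg.rexp.measurable
  refine convexOn_neg_log_of_rpow_mul_rpow_le convex_univ (fun t _ => integral_exp_pos (hint t))
    fun t _ s _ a b ha hb hab => ?_
  refine (satisfiesPrekopaLeindler_volume_pi n).integral_rpow_mul_integral_rpow_le ha hb hab
    (hmeas t) (hmeas s) (hmeas _) (fun _ => (Real.exp_pos _).le) (fun _ => (Real.exp_pos _).le)
    (hint _) fun x y => ?_
  rw [← Real.exp_mul, ← Real.exp_mul, ← Real.exp_add, Real.exp_le_exp]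
  have := hφ.2 (mem_univ (t, x)) (mem_univ (s, y)) ha.le hb.le hab
  simp only [Prod.smul_mk, Prod.mk_add_mk, smul_eq_mul] at this ⊢
  linarith
end

section
/- Prékopa's theorem implies the multiplicative Brunn–Minkowski theorem: if 𝒜 ⊆ ℝ^(n+1) is a convex body with slices A_t, then t ↦ log vol(A_t) is concave on the interval where A_t has positive volume. (Obtained by applying Prékopa to the convex function equal to 0 on 𝒜 and +∞ off 𝒜, or to a suitable limit of finite convex functions.) -/
/-!
The convex indicator of `𝒜` is the increasing limit of the finite convex functions
`φₖ = (k + 1) · infDist · 𝒜`. Each `exp (-φₖ (t, ·))` is integrable because `𝒜` is bounded, so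
Prékopa makes `t ↦ ∫ exp (-φₖ (t, x)) dx` log-concave, and by dominated convergence these integrals
tend to `vol A_t` (`𝒜` is closed). Log-concavity passes to the pointwise limit wherever the limit
is positive, and the same limiting inequality shows that the set where it is positive is convex.
-/

open MeasureTheory Metric Filter Topology Set Real

theorem convexOn_univ_infDist {E : Type*} [NormedAddCommGroup E] [NormedSpace ℝ E]
    {s : Set E} (hs : Convex ℝ s) : ConvexOn ℝ univ (infDist · s) := by
  rcases s.eq_empty_or_nonempty with rfl | hne
  · simpa using convexOn_const (0 : ℝ) convex_univ
  refine ⟨convex_univ, fun a _ b _ α β hα hβ hαβ => le_of_forall_pos_le_add fun ε hε => ?_⟩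
  obtain ⟨y, hy, hay⟩ := (infDist_lt_iff hne).1 (lt_add_of_pos_right (infDist a s) hε)
  obtain ⟨z, hz, hbz⟩ := (infDist_lt_iff hne).1 (lt_add_of_pos_right (infDist b s) hε)
  calc infDist (α • a + β • b) s
      ≤ ‖α • (a - y) + β • (b - z)‖ := by
        rw [smul_sub, smul_sub, sub_add_sub_comm, ← dist_eq_norm]
        exact infDist_le_dist_of_mem (hs hy hz hα hβ hαβ)
    _ ≤ α * dist a y + β * dist b z := by
        simpa only [dist_eq_norm, smul_eq_mul] using convexOn_univ_norm.2 trivial trivial hα hβ hαβ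
    _ ≤ α * (infDist a s + ε) + β * (infDist b s + ε) := by gcongr
    _ = α • infDist a s + β • infDist b s + ε := by
        rw [smul_eq_mul, smul_eq_mul]; linear_combination ε * hαβ

theorem norm_sub_le_infDist {E : Type*} [NormedAddCommGroup E] {s : Set E} {R : ℝ}
    (hne : s.Nonempty) (hR : s ⊆ closedBall 0 R) (x : E) : ‖x‖ - R ≤ infDist x s := by
  refine (le_infDist hne).2 fun y hy => ?_
  have := mem_closedBall_zero_iff.1 (hR hy)
  have := norm_sub_norm_le x y
  rw [dist_eq_norm]; linarith

theorem concaveOn_log_of_tendsto {E ι : Type*} [AddCommGroup E] [Module ℝ E]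
    {l : Filter ι} [l.NeBot] {I : ι → E → ℝ} {V : E → ℝ}
    (hpos : ∀ k t, 0 < I k t) (hI : ∀ k, ConcaveOn ℝ univ fun t => log (I k t))
    (hlim : ∀ t, Tendsto (fun k => I k t) l (𝓝 (V t))) :
    ConcaveOn ℝ {t | 0 < V t} fun t => log (V t) := by
  have hlog {t} (ht : 0 < V t) : Tendsto (fun k => log (I k t)) l (𝓝 (log (V t))) :=
    ((continuousAt_log ht.ne').tendsto).comp (hlim t)
  -- The limit of the log-concavity inequalities, in exponential form so that it makes sense
  -- before `0 < V (α • a + β • b)` is known; it yields both convexity of `{V > 0}` and concavity.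
  have key {a b : E} (ha : 0 < V a) (hb : 0 < V b) {α β : ℝ} (hα : 0 ≤ α) (hβ : 0 ≤ β)
      (hαβ : α + β = 1) : exp (α * log (V a) + β * log (V b)) ≤ V (α • a + β • b) := by
    refine le_of_tendsto_of_tendsto' (f := fun k => exp (α * log (I k a) + β * log (I k b)))
      ?_ (hlim _) fun k => ?_
    · exact (continuous_exp.tendsto _).comp (((hlog ha).const_mul α).add ((hlog hb).const_mul β))
    · rw [← exp_log (hpos k (α • a + β • b)), exp_le_exp]
      exact (hI k).2 trivial trivial hα hβ hαβ
  have hconv : Convex ℝ {t | 0 < V t} := fun a ha b hb α β hα hβ hαβ =>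
    (exp_pos _).trans_le (key ha hb hα hβ hαβ)
  refine ⟨hconv, fun a ha b hb α β hα hβ hαβ => ?_⟩
  rw [← log_exp (α • log (V a) + β • log (V b))]
  exact log_le_log (exp_pos _) (key ha hb hα hβ hαβ)

theorem integrable_exp_neg_mul_norm {E : Type*} [NormedAddCommGroup E] [NormedSpace ℝ E]
    [FiniteDimensional ℝ E] [MeasurableSpace E] [BorelSpace E] (μ : Measure E)
    [μ.IsAddHaarMeasure] {c : ℝ} (hc : 0 < c) :
    Integrable (fun x : E => exp (-(c * ‖x‖))) μ := by
  cases subsingleton_or_nontrivial E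
  · have : IsFiniteMeasure μ := ⟨by simp⟩
    refine (integrable_const (1 : ℝ)).mono' (by fun_prop) (ae_of_all _ fun x => ?_)
    simp [Subsingleton.elim x 0]
  rw [integrable_fun_norm_addHaar μ (f := fun r => exp (-(c * r)))]
  refine (integrableOn_rpow_mul_exp_neg_mul_rpow (s := (Module.finrank ℝ E - 1 : ℕ)) (p := 1)
    (neg_one_lt_zero.trans_le (Nat.cast_nonneg _)) one_pos hc).congr_fun (fun r _ => ?_)
    measurableSet_Ioi
  simp [rpow_natCast]

theorem integrable_exp_neg_mul_of_norm_sub_le {E : Type*} [NormedAddCommGroup E]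
    [NormedSpace ℝ E] [FiniteDimensional ℝ E] [MeasurableSpace E] [BorelSpace E]
    (μ : Measure E) [μ.IsAddHaarMeasure] {f : E → ℝ} (hf : Continuous f) {R c : ℝ} (hc : 0 < c)
    (hfR : ∀ x, ‖x‖ - R ≤ f x) : Integrable (fun x => exp (-(c * f x))) μ := by
  refine ((integrable_exp_neg_mul_norm μ hc).const_mul (exp (c * R))).mono' (by fun_prop)
    (ae_of_all _ fun x => ?_)
  rw [norm_of_nonneg (exp_pos _).le, ← exp_add, exp_le_exp]
  linear_combination mul_le_mul_of_nonneg_left (hfR x) hc.le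

theorem tendsto_integral_exp_neg_mul {X : Type*} [MeasurableSpace X] {μ : Measure X}
    {f : X → ℝ} (hf : Measurable f) (hf0 : 0 ≤ f) (hint : Integrable (fun x => exp (-f x)) μ) :
    Tendsto (fun k : ℕ => ∫ x, exp (-((k + 1) * f x)) ∂μ) atTop
      (𝓝 (μ {x | f x = 0}).toReal) := by
  have hlim (x : X) : Tendsto (fun k : ℕ => exp (-((k + 1) * f x))) atTop
      (𝓝 ({x | f x = 0}.indicator 1 x)) := by
    rcases (hf0 x).eq_or_lt with hx | hx
    · simp [← hx]
    · rw [indicator_of_notMem (show x ∉ {x | f x = 0} from hx.ne')]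
      exact tendsto_exp_atBot.comp <| tendsto_neg_atTop_atBot.comp <|
        (tendsto_natCast_atTop_atTop.atTop_add tendsto_const_nhds).atTop_mul_const hx
  have hdom (k : ℕ) (x : X) : ‖exp (-((k + 1) * f x))‖ ≤ exp (-f x) := by
    rw [norm_of_nonneg (exp_pos _).le, exp_le_exp, neg_le_neg_iff]
    exact le_mul_of_one_le_left (hf0 x) (by simp)
  rw [← measureReal_def,
    ← integral_indicator_one (s := {x | f x = 0}) (hf (measurableSet_singleton 0))]
  exact tendsto_integral_of_dominated_convergence _ (fun k => by fun_prop) hint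
    (fun k => ae_of_all _ (hdom k)) (ae_of_all _ hlim)

/-- Prékopa's theorem implies the multiplicative Brunn–Minkowski theorem. -/
theorem prekopa_implies_multiplicative_BM (n : ℕ)
    (prekopa : ∀ φ : ℝ × (Fin n → ℝ) → ℝ, ConvexOn ℝ Set.univ φ →
      (∀ t : ℝ, Integrable (fun x : Fin n → ℝ => Real.exp (-φ (t, x)))) →
      ConvexOn ℝ Set.univ
        (fun t : ℝ => -Real.log (∫ x : Fin n → ℝ, Real.exp (-φ (t, x))))) :
    ∀ 𝒜 : Set (ℝ × (Fin n → ℝ)), IsCompact 𝒜 → Convex ℝ 𝒜 →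
      (interior 𝒜).Nonempty →
      ConcaveOn ℝ {t : ℝ | 0 < volume {a : Fin n → ℝ | (t, a) ∈ 𝒜}}
        (fun t : ℝ => Real.log (volume {a : Fin n → ℝ | (t, a) ∈ 𝒜}).toReal) := by
  intro 𝒜 hcomp hconv hinterior
  obtain ⟨R, hR⟩ := hcomp.isBounded.subset_closedBall (0 : ℝ × (Fin n → ℝ))
  have hne : 𝒜.Nonempty := hinterior.mono interior_subset
  set d : ℝ × (Fin n → ℝ) → ℝ := (infDist · 𝒜)
  have hd_cont (t : ℝ) : Continuous fun x : Fin n → ℝ => d (t, x) := by fun_prop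
  have hd_growth (t : ℝ) (x : Fin n → ℝ) : ‖x‖ - R ≤ d (t, x) :=
    (sub_le_sub_right (norm_snd_le (t, x)) R).trans (norm_sub_le_infDist hne hR _)
  have hintegrable (k : ℕ) (t : ℝ) : Integrable fun x => exp (-((k + 1) * d (t, x))) :=
    integrable_exp_neg_mul_of_norm_sub_le volume (hd_cont t) (by positivity) (hd_growth t)
  have hzero (t : ℝ) : {x | d (t, x) = 0} = {x | (t, x) ∈ 𝒜} := by
    ext x; exact (hcomp.isClosed.mem_iff_infDist_zero hne).symm
  have hfin (t : ℝ) : volume {x : Fin n → ℝ | (t, x) ∈ 𝒜} < ⊤ := by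
    refine (measure_mono fun x hx => ?_).trans_lt (measure_closedBall_lt_top (x := 0) (r := R))
    simpa using (norm_snd_le (t, x)).trans (mem_closedBall_zero_iff.1 (hR hx))
  have key := concaveOn_log_of_tendsto (l := atTop)
    (I := fun (k : ℕ) t => ∫ x, exp (-((k + 1) * d (t, x))))
    (fun k t => integral_exp_pos (hintegrable k t))
    (fun k => neg_convexOn_iff.1 (prekopa (fun p => (k + 1) * d p)
      ((convexOn_univ_infDist hconv).smul k.cast_add_one_pos.le) (hintegrable k)))
    (fun t => hzero t ▸ tendsto_integral_exp_neg_mul (hd_cont t).measurable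
      (fun x => infDist_nonneg) (by simpa using hintegrable 0 t))
  have hdomain : {t | 0 < volume {x : Fin n → ℝ | (t, x) ∈ 𝒜}} =
      {t | 0 < (volume {x : Fin n → ℝ | (t, x) ∈ 𝒜}).toReal} := by
    ext t; simp [ENNReal.toReal_pos_iff, hfin t]
  rw [hdomain]
  exact key
end

section
/- (Proposition 4.1) Let u : B → ℝ be measurable with u < 0 on the unit ball B ⊆ ℂⁿ, let 0 < p < 2, and let h be a square-integrable function on B. Define ‖h‖²_s := ∫_B |h|² e^{−2 max(u+s,0)} for s ≥ 0. Then ∫_B |h|² e^{−pu} = a_p ∫₀^∞ e^{ps} ‖h‖²_s ds + b_p ‖h‖²₀, where a_p = (1/p + 1/(2−p))^{−1} and b_p = (1/p)·a_p, in the sense that both sides are simultaneously finite or infinite and equal. -/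
/-!
Pointwise, for `u ≤ 0` one computes, splitting `(0, ∞)` at `s = -u`,
`∫₀^∞ e^{ps} e^{-2 max(u+s,0)} ds = (e^{-pu} - 1)/p + e^{-pu}/(2-p)`,
so that `e^{-pu} = a_p ∫₀^∞ e^{ps} e^{-2 max(u+s,0)} ds + b_p`. Multiplying by `|h|²`,
integrating over `B` and exchanging the two integrals (Tonelli) gives the identity;
`‖h‖₀² = ∫_B |h|²` because `u < 0`.
-/

open MeasureTheory ENNReal Set

lemma lintegral_Ioc_ofReal_exp_mul {p : ℝ} (hp : p ≠ 0) {v : ℝ} (hv : 0 ≤ v) :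
    ∫⁻ s in Ioc 0 v, ENNReal.ofReal (Real.exp (p * s))
      = ENNReal.ofReal ((Real.exp (p * v) - 1) / p) := by
  rw [← ofReal_integral_eq_lintegral_ofReal (Continuous.integrableOn_Ioc (by fun_prop))
    (ae_of_all _ fun s => (Real.exp_pos _).le), ← intervalIntegral.integral_of_le hv,
    intervalIntegral.integral_comp_mul_left (fun x => Real.exp x) hp, integral_exp,
    mul_zero, Real.exp_zero, smul_eq_mul, inv_mul_eq_div]

lemma lintegral_Ioi_ofReal_exp_mul {a : ℝ} (ha : a < 0) (c : ℝ) :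
    ∫⁻ s in Ioi c, ENNReal.ofReal (Real.exp (a * s))
      = ENNReal.ofReal (-Real.exp (a * c) / a) := by
  rw [← ofReal_integral_eq_lintegral_ofReal (integrableOn_exp_mul_Ioi ha c)
    (ae_of_all _ fun s => (Real.exp_pos _).le), integral_exp_mul_Ioi ha]

lemma lintegral_Ioi_ofReal_exp_mul_mul_exp_max {p : ℝ} (hp0 : 0 < p) (hp2 : p < 2)
    {u : ℝ} (hu : u ≤ 0) :
    ∫⁻ s in Ioi 0, ENNReal.ofReal (Real.exp (p * s))
        * ENNReal.ofReal (Real.exp (-2 * max (u + s) 0))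
      = ENNReal.ofReal ((Real.exp (-p * u) - 1) / p + Real.exp (-p * u) / (2 - p)) := by
  have hupper : ∀ s ∈ Ioi (-u), ENNReal.ofReal (Real.exp (p * s))
      * ENNReal.ofReal (Real.exp (-2 * max (u + s) 0))
      = ENNReal.ofReal (Real.exp (-2 * u)) * ENNReal.ofReal (Real.exp ((p - 2) * s)) := by
    intro s hs
    rw [max_eq_left (by linarith [mem_Ioi.mp hs]), ← ENNReal.ofReal_mul (Real.exp_pos _).le,
      ← ENNReal.ofReal_mul (Real.exp_pos _).le, ← Real.exp_add, ← Real.exp_add]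
    ring_nf
  have hlower : ∀ s ∈ Ioc 0 (-u), ENNReal.ofReal (Real.exp (p * s))
      * ENNReal.ofReal (Real.exp (-2 * max (u + s) 0)) = ENNReal.ofReal (Real.exp (p * s)) := by
    intro s hs
    rw [max_eq_right (by linarith [hs.2]), mul_zero, Real.exp_zero, ENNReal.ofReal_one, mul_one]
  rw [← Ioc_union_Ioi_eq_Ioi (neg_nonneg.mpr hu),
    lintegral_union measurableSet_Ioi (Ioc_disjoint_Ioi le_rfl),
    setLIntegral_congr_fun measurableSet_Ioc hlower,
    setLIntegral_congr_fun measurableSet_Ioi hupper,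
    lintegral_const_mul _ (by fun_prop), lintegral_Ioc_ofReal_exp_mul hp0.ne' (by linarith),
    lintegral_Ioi_ofReal_exp_mul (by linarith), ← ENNReal.ofReal_mul (Real.exp_pos _).le,
    ← ENNReal.ofReal_add]
  · have hexp : Real.exp (-2 * u) * Real.exp ((p - 2) * -u) = Real.exp (-p * u) := by
      rw [← Real.exp_add]; ring_nf
    rw [mul_div_assoc', mul_neg (Real.exp _), hexp, neg_div, ← div_neg, neg_sub, neg_mul, mul_neg]
  · exact div_nonneg (sub_nonneg.mpr (Real.one_le_exp (by nlinarith))) hp0.le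
  · exact mul_nonneg (Real.exp_pos _).le
      (div_nonneg_of_nonpos (neg_nonpos.mpr (Real.exp_pos _).le) (by linarith))

lemma ofReal_exp_neg_mul_eq_lintegral {p : ℝ} (hp0 : 0 < p) (hp2 : p < 2) {u : ℝ} (hu : u ≤ 0) :
    ENNReal.ofReal (Real.exp (-p * u))
      = ENNReal.ofReal (1 / p + 1 / (2 - p))⁻¹ * (∫⁻ s in Ioi 0, ENNReal.ofReal (Real.exp (p * s))
          * ENNReal.ofReal (Real.exp (-2 * max (u + s) 0)))
        + ENNReal.ofReal ((1 / p + 1 / (2 - p))⁻¹ / p) := by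
  have h2p : 0 < 2 - p := by linarith
  have hpos : 0 < 1 / p + 1 / (2 - p) := by positivity
  rw [lintegral_Ioi_ofReal_exp_mul_mul_exp_max hp0 hp2 hu,
    ← ENNReal.ofReal_mul (inv_pos.mpr hpos).le, ← ENNReal.ofReal_add]
  · congr 1
    field_simp
    ring
  · exact mul_nonneg (inv_pos.mpr hpos).le (add_nonneg
      (div_nonneg (sub_nonneg.mpr (Real.one_le_exp (by nlinarith))) hp0.le) (by positivity))
  · positivity

theorem lintegral_mul_ofReal_exp_neg_mul_eq {α : Type*} [MeasurableSpace α] {μ : Measure α}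
    [SFinite μ] {g : α → ℝ≥0∞} (hg : AEMeasurable g μ) {u : α → ℝ} (hu : Measurable u)
    (hu0 : ∀ᵐ x ∂μ, u x ≤ 0) {p : ℝ} (hp0 : 0 < p) (hp2 : p < 2) :
    ∫⁻ x, g x * ENNReal.ofReal (Real.exp (-p * u x)) ∂μ
      = ENNReal.ofReal (1 / p + 1 / (2 - p))⁻¹
          * (∫⁻ s in Ioi 0, ENNReal.ofReal (Real.exp (p * s))
              * ∫⁻ x, g x * ENNReal.ofReal (Real.exp (-2 * max (u x + s) 0)) ∂μ)
        + ENNReal.ofReal ((1 / p + 1 / (2 - p))⁻¹ / p) * ∫⁻ x, g x ∂μ := by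
  set K : ℝ → ℝ≥0∞ := fun t => ∫⁻ s in Ioi 0, ENNReal.ofReal (Real.exp (p * s))
    * ENNReal.ofReal (Real.exp (-2 * max (t + s) 0))
  have hswap : ∫⁻ s in Ioi 0, ENNReal.ofReal (Real.exp (p * s))
        * ∫⁻ x, g x * ENNReal.ofReal (Real.exp (-2 * max (u x + s) 0)) ∂μ
      = ∫⁻ x, g x * K (u x) ∂μ := by
    simp_rw [← lintegral_const_mul' _ _ ofReal_ne_top, mul_left_comm _ (g _)]
    rw [lintegral_lintegral_swap (f := fun s x => g x * (ENNReal.ofReal (Real.exp (p * s))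
      * ENNReal.ofReal (Real.exp (-2 * max (u x + s) 0)))) (hg.comp_snd.mul (by fun_prop : Measurable fun z : ℝ × α => ENNReal.ofReal (Real.exp (p * z.1))
      * ENNReal.ofReal (Real.exp (-2 * max (u z.2 + z.1) 0))).aemeasurable)]
    congr with x
    exact lintegral_const_mul _ (by fun_prop)
  rw [hswap, ← lintegral_const_mul' _ _ ofReal_ne_top, ← lintegral_const_mul' _ _ ofReal_ne_top,
    ← lintegral_add_right' _ (hg.const_mul _)]
  refine lintegral_congr_ae (hu0.mono fun x hx => ?_)
  dsimp only
  rw [ofReal_exp_neg_mul_eq_lintegral hp0 hp2 hx]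
  ring

/-- Proposition 4.1: the weighted norm identity, in `ℝ≥0∞` so that both sides are
simultaneously finite or infinite and equal. -/
theorem norm_decomposition (n : ℕ)
    (B : Set (Fin n → ℂ)) (hB : B = {z : Fin n → ℂ | ∑ i, ‖z i‖ ^ 2 < 1})
    (u : (Fin n → ℂ) → ℝ) (hu : Measurable u) (huneg : ∀ z ∈ B, u z < 0)
    (p : ℝ) (hp0 : 0 < p) (hp2 : p < 2)
    (h : (Fin n → ℂ) → ℂ) (hh : MemLp h 2 (volume.restrict B))
    (N : ℝ → ℝ≥0∞)
    (hN : ∀ s : ℝ, N s = ∫⁻ z in B, (‖h z‖₊ : ℝ≥0∞) ^ 2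
        * ENNReal.ofReal (Real.exp (-2 * max (u z + s) 0)))
    (a_p b_p : ℝ) (ha : a_p = (1 / p + 1 / (2 - p))⁻¹) (hb : b_p = a_p / p) :
    (∫⁻ z in B, (‖h z‖₊ : ℝ≥0∞) ^ 2 * ENNReal.ofReal (Real.exp (-p * u z)))
      = ENNReal.ofReal a_p
          * (∫⁻ s in Set.Ioi (0:ℝ), ENNReal.ofReal (Real.exp (p * s)) * N s)
        + ENNReal.ofReal b_p * N 0 := by
  have hBm : MeasurableSet B := hB ▸ (isOpen_lt (by fun_prop) continuous_const).measurableSet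
  have hu0 : ∀ᵐ z ∂volume.restrict B, u z ≤ 0 :=
    (ae_restrict_mem hBm).mono fun z hz => (huneg z hz).le
  have hN0 : N 0 = ∫⁻ z in B, (‖h z‖₊ : ℝ≥0∞) ^ 2 := by
    refine (hN 0).trans (lintegral_congr_ae (hu0.mono fun z hz => ?_))
    simp only [add_zero, max_eq_right hz, mul_zero, Real.exp_zero, ENNReal.ofReal_one, mul_one]
  simp only [hN0, hN, ha, hb]
  exact lintegral_mul_ofReal_exp_neg_mul_eq
    (hh.aestronglyMeasurable.enorm.pow_const 2) hu hu0 hp0 hp2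
end

section
/- Let k : [0,∞) → ℝ be convex and suppose ∫₀^∞ e^{s − k(s)} ds < ∞. Then there exists p > 1 such that ∫₀^∞ e^{ps − k(s)} ds < ∞. (One-dimensional openness.) -/
/-!
Since `∫ e^{s - k s}` converges, `s ↦ k s - s` cannot be nonincreasing, so some secant of `k`
has slope `m > 1`. By convexity `k` lies above the line through that secant to the right of it,
so for `1 < p < m` the integrand `e^{p s - k s}` decays like `e^{-(m - p) s}` at infinity, while on
the bounded part it is at most a constant multiple of `e^{s - k s}`.
-/

open MeasureTheory Set Real

theorem ConvexOn.add_slope_mul_sub_le {𝕜 : Type*} [Field 𝕜] [LinearOrder 𝕜]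
    [IsStrictOrderedRing 𝕜] {D : Set 𝕜} {f : 𝕜 → 𝕜} {x y z : 𝕜} (hf : ConvexOn 𝕜 D f)
    (hx : x ∈ D) (hy : y ∈ D) (hz : z ∈ D) (hxy : x < y) (hyz : y ≤ z) :
    f x + slope f x y * (z - x) ≤ f z := by
  have hxz : x < z := hxy.trans_le hyz
  have hslope : slope f x y ≤ slope f x z :=
    hf.monotoneOn_slope_gt hx ⟨hy, hxy⟩ ⟨hz, hxz⟩ hyz
  rw [slope_def_field f x z, le_div_iff₀ (sub_pos.2 hxz)] at hslope
  linarith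

theorem not_integrableOn_exp_neg_of_antitoneOn {g : ℝ → ℝ} {a : ℝ}
    (hg : AntitoneOn g (Ioi a)) : ¬ IntegrableOn (fun s => exp (-g s)) (Ioi a) := by
  intro hint
  have hconst : IntegrableOn (fun _ : ℝ => exp (-g (a + 1))) (Ioi (a + 1)) := by
    refine Integrable.mono' (hint.mono_set (Ioi_subset_Ioi (lt_add_one a).le))
      aestronglyMeasurable_const ?_
    filter_upwards [ae_restrict_mem measurableSet_Ioi] with s hs
    rw [norm_of_nonneg (exp_pos _).le, exp_le_exp, neg_le_neg_iff]
    exact hg (lt_add_one a) ((lt_add_one a).trans hs) hs.le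
  simp [integrableOn_const_iff, (exp_pos _).ne'] at hconst

theorem exists_one_lt_slope_of_integrableOn_exp_sub {k : ℝ → ℝ} {a : ℝ}
    (hint : IntegrableOn (fun s => exp (s - k s)) (Ioi a)) :
    ∃ s₁ s₂, a < s₁ ∧ s₁ < s₂ ∧ 1 < slope k s₁ s₂ := by
  have hnot : ¬ AntitoneOn (fun s => k s - s) (Ioi a) := fun h =>
    not_integrableOn_exp_neg_of_antitoneOn h (by simpa only [neg_sub] using hint)
  simp only [AntitoneOn, not_forall, not_le] at hnot
  obtain ⟨s₁, hs₁, s₂, -, h12, hlt⟩ := hnot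
  have h12 : s₁ < s₂ := h12.lt_of_ne (by rintro rfl; exact hlt.false)
  refine ⟨s₁, s₂, hs₁, h12, ?_⟩
  rw [slope_def_field, one_lt_div (sub_pos.2 h12)]
  linarith

theorem ConvexOn.integrableOn_exp_mul_sub {k : ℝ → ℝ} {a s₁ s₂ p : ℝ}
    (hk : ConvexOn ℝ (Ici a) k) (hint : IntegrableOn (fun s => exp (s - k s)) (Ioi a))
    (hs₁ : a ≤ s₁) (h12 : s₁ < s₂) (hp : 1 ≤ p) (hpm : p < slope k s₁ s₂) :
    IntegrableOn (fun s => exp (p * s - k s)) (Ioi a) := by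
  set m := slope k s₁ s₂
  have hcont : ContinuousOn k (Ioi a) := by
    simpa only [interior_Ici] using hk.continuousOn_interior
  have hmeas : AEStronglyMeasurable (fun s => exp (p * s - k s)) (volume.restrict (Ioi a)) :=
    (continuous_exp.comp_continuousOn
      ((continuous_const.mul continuous_id).continuousOn.sub hcont)).aestronglyMeasurable
      measurableSet_Ioi
  have hbound : IntegrableOn (fun s => exp ((p - 1) * s₂) * exp (s - k s)
      + exp (m * s₁ - k s₁) * exp (-(m - p) * s)) (Ioi a) :=
    (hint.const_mul _).add ((exp_neg_integrableOn_Ioi a (by linarith)).const_mul _)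
  refine Integrable.mono' hbound hmeas ?_
  filter_upwards [ae_restrict_mem measurableSet_Ioi] with s hs
  rw [norm_of_nonneg (exp_pos _).le, ← exp_add, ← exp_add]
  rcases le_total s s₂ with hs₂ | hs₂
  · have : p * s - k s ≤ (p - 1) * s₂ + (s - k s) := by nlinarith
    exact (exp_le_exp.2 this).trans (le_add_of_nonneg_right (exp_pos _).le)
  · have hline := hk.add_slope_mul_sub_le hs₁ (hs₁.trans h12.le) (mem_Ici.2 (le_of_lt hs)) h12 hs₂
    have : p * s - k s ≤ m * s₁ - k s₁ + -(m - p) * s := by linarith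
    exact (exp_le_exp.2 this).trans (le_add_of_nonneg_left (exp_pos _).le)

/-- One-dimensional openness. -/
theorem one_dimensional_openness (k : ℝ → ℝ)
    (hk : ConvexOn ℝ (Set.Ici 0) k)
    (hint : IntegrableOn (fun s => Real.exp (s - k s)) (Set.Ioi (0:ℝ))) :
    ∃ p : ℝ, 1 < p ∧
      IntegrableOn (fun s => Real.exp (p * s - k s)) (Set.Ioi (0:ℝ)) := by
  obtain ⟨s₁, s₂, hs₁, h12, hm⟩ := exists_one_lt_slope_of_integrableOn_exp_sub hint
  exact ⟨(1 + slope k s₁ s₂) / 2, by linarith,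
    hk.integrableOn_exp_mul_sub hint hs₁.le h12 (by linarith) (by linarith)⟩
end

section
/- Let (X,μ) be a measure space, λ : X → ℝ bounded measurable, ε > 0, s > 1/ε. For h ∈ L²(μ), let r = 1_{λ ≤ 1+ε}·h. If ∫₀^s e^t (∫_X |h|² e^{−tλ} dμ) dt ≤ M, then ‖r‖²_{L²(μ)} ≤ 2εM. -/
open MeasureTheory ENNReal

/-! On the sublevel set `{λ ≤ 1 + ε}` the weight `e^t e^{-tλ}` is at least `e^{-εt}`, so the
`t`-integrand in the hypothesis dominates `e^{-εt} ‖r‖²`. Integrating over `(0, s]` gives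
`‖r‖² ∫₀^s e^{-εt} dt ≤ M`, and `∫₀^s e^{-εt} dt = (1 - e^{-εs}) / ε ≥ 1 / (2ε)` because
`εs > 1` and `e ≥ 2`. -/

theorem intervalIntegral_exp_neg_mul {ε : ℝ} (hε : ε ≠ 0) (s : ℝ) :
    ∫ t in (0:ℝ)..s, Real.exp (-ε * t) = (1 - Real.exp (-ε * s)) / ε := by
  have hderiv : ∀ t ∈ Set.uIcc (0:ℝ) s,
      HasDerivAt (fun t => Real.exp (-ε * t) / -ε) (Real.exp (-ε * t)) t := by
    intro t _
    have := (hasDerivAt_const_mul (-ε)).exp.div_const (-ε) (x := t)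
    rwa [mul_div_cancel_right₀ _ (neg_ne_zero.2 hε)] at this
  rw [intervalIntegral.integral_eq_sub_of_hasDerivAt hderiv
    ((by fun_prop : Continuous fun t => Real.exp (-ε * t)).intervalIntegrable _ _)]
  simp only [mul_zero, Real.exp_zero]
  field_simp
  ring

theorem ofReal_one_div_two_mul_le_lintegral_exp_neg_mul {ε s : ℝ} (hε : 0 < ε) (hs : 1 < ε * s) :
    ENNReal.ofReal (1 / (2 * ε)) ≤ ∫⁻ t in Set.Ioc 0 s, ENNReal.ofReal (Real.exp (-ε * t)) := by
  have hs0 : 0 ≤ s := by nlinarith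
  rw [← ofReal_integral_eq_lintegral_ofReal
      (by fun_prop : Continuous fun t => Real.exp (-ε * t)).integrableOn_Ioc
      (ae_of_all _ fun t => (Real.exp_pos _).le),
    ← intervalIntegral.integral_of_le hs0, intervalIntegral_exp_neg_mul hε.ne']
  refine ENNReal.ofReal_le_ofReal ?_
  have hexp : Real.exp (-ε * s) * 2 ≤ 1 :=
    calc Real.exp (-ε * s) * 2 ≤ Real.exp (-ε * s) * Real.exp (ε * s) := by
          gcongr; linarith [Real.add_one_le_exp (ε * s)]
      _ = 1 := by rw [← Real.exp_add, neg_mul, neg_add_cancel, Real.exp_zero]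
  rw [← div_div]
  gcongr
  linarith

theorem ofReal_exp_mul_lintegral_indicator_le {X E : Type*} [MeasurableSpace X]
    [NormedAddCommGroup E] (μ : Measure X) (lam : X → ℝ) (h : X → E) {c t : ℝ} (ht : 0 ≤ t) :
    ENNReal.ofReal (Real.exp (-t * c)) * ∫⁻ x, (‖{x | lam x ≤ c}.indicator h x‖₊ : ℝ≥0∞) ^ 2 ∂μ
      ≤ ∫⁻ x, (‖h x‖₊ : ℝ≥0∞) ^ 2 * ENNReal.ofReal (Real.exp (-t * lam x)) ∂μ := by
  rw [← lintegral_const_mul' _ _ ENNReal.ofReal_ne_top]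
  refine lintegral_mono fun x => ?_
  by_cases hx : lam x ≤ c
  · rw [Set.indicator_of_mem (by exact hx), mul_comm]
    exact mul_le_mul_right (ENNReal.ofReal_le_ofReal (Real.exp_le_exp.2 (by nlinarith))) _
  · simp [Set.indicator_of_notMem (show x ∉ {x | lam x ≤ c} from hx)]

theorem remainder_estimate_general {X : Type*} [MeasurableSpace X] (μ : Measure X)
    (lam : X → ℝ)
    (ε s : ℝ) (hε : 0 < ε) (hs : 1 / ε < s)
    (h : X → ℂ)
    (r : X → ℂ) (hr : r = Set.indicator {x | lam x ≤ 1 + ε} h)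
    (M : ℝ)
    (hM : (∫⁻ t in Set.Ioc (0:ℝ) s, ENNReal.ofReal (Real.exp t)
        * ∫⁻ x, (‖h x‖₊ : ℝ≥0∞) ^ 2 * ENNReal.ofReal (Real.exp (-t * lam x)) ∂μ)
      ≤ ENNReal.ofReal M) :
    (∫⁻ x, (‖r x‖₊ : ℝ≥0∞) ^ 2 ∂μ) ≤ ENNReal.ofReal (2 * ε * M) := by
  subst hr
  set R := ∫⁻ x, (‖{x | lam x ≤ 1 + ε}.indicator h x‖₊ : ℝ≥0∞) ^ 2 ∂μ
  have hεs : 1 < ε * s := by rwa [div_lt_iff₀' hε] at hs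
  have hpointwise : ∀ t ∈ Set.Ioc (0:ℝ) s, ENNReal.ofReal (Real.exp (-ε * t)) * R
      ≤ ENNReal.ofReal (Real.exp t)
        * ∫⁻ x, (‖h x‖₊ : ℝ≥0∞) ^ 2 * ENNReal.ofReal (Real.exp (-t * lam x)) ∂μ := by
    intro t ht
    have hsplit : Real.exp (-ε * t) = Real.exp t * Real.exp (-t * (1 + ε)) := by
      rw [← Real.exp_add]; ring_nf
    rw [hsplit, ENNReal.ofReal_mul (Real.exp_pos _).le, mul_assoc]
    exact mul_le_mul_right (ofReal_exp_mul_lintegral_indicator_le μ lam h ht.1.le) _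
  have hbound : ENNReal.ofReal (1 / (2 * ε)) * R ≤ ENNReal.ofReal M :=
    calc ENNReal.ofReal (1 / (2 * ε)) * R
        ≤ (∫⁻ t in Set.Ioc 0 s, ENNReal.ofReal (Real.exp (-ε * t))) * R :=
          mul_le_mul_left (ofReal_one_div_two_mul_le_lintegral_exp_neg_mul hε hεs) _
      _ = ∫⁻ t in Set.Ioc 0 s, ENNReal.ofReal (Real.exp (-ε * t)) * R :=
          (lintegral_mul_const _ (by fun_prop)).symm
      _ ≤ ENNReal.ofReal M := (setLIntegral_mono' measurableSet_Ioc hpointwise).trans hM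
  calc R = ENNReal.ofReal (2 * ε) * (ENNReal.ofReal (1 / (2 * ε)) * R) := by
        rw [← mul_assoc, ← ENNReal.ofReal_mul (by positivity), mul_one_div_cancel (by positivity),
          ENNReal.ofReal_one, one_mul]
    _ ≤ ENNReal.ofReal (2 * ε) * ENNReal.ofReal M := mul_le_mul_right hbound _
    _ = ENNReal.ofReal (2 * ε * M) := (ENNReal.ofReal_mul (by positivity)).symm

theorem remainder_estimate {X : Type*} [MeasurableSpace X] (μ : Measure X)
    (lam : X → ℝ) (hlam : Measurable lam) (C : ℝ) (hbdd : ∀ x, |lam x| ≤ C)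
    (ε s : ℝ) (hε : 0 < ε) (hs : 1 / ε < s)
    (h : X → ℂ) (hh : MemLp h 2 μ)
    (r : X → ℂ) (hr : r = Set.indicator {x | lam x ≤ 1 + ε} h)
    (M : ℝ)
    (hM : (∫⁻ t in Set.Ioc (0:ℝ) s, ENNReal.ofReal (Real.exp t)
        * ∫⁻ x, (‖h x‖₊ : ℝ≥0∞) ^ 2 * ENNReal.ofReal (Real.exp (-t * lam x)) ∂μ)
      ≤ ENNReal.ofReal M) :
    (∫⁻ x, (‖r x‖₊ : ℝ≥0∞) ^ 2 ∂μ) ≤ ENNReal.ofReal (2 * ε * M) :=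
  remainder_estimate_general μ lam ε s hε hs h r hr M hM
end
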